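/- The average Pauli weight of the Jordan–Wigner transformation of the square-lattice hopping Hamiltonian with enumeration f equals C¹(f)/(2N(N−1)) + 1, where C¹(f) is the edgesum of f on the N×N lattice; in particular, for the S-pattern this equals N/2 + 3/2. -/

import Mathlib

/-- Edgesum of an enumeration `f` of the `N × N` square lattice. -/
def edgesum (N : ℕ) (f : Fin N × Fin N → ℤ) : ℤ :=
  ∑ p ∈ Finset.univ.filter (fun p : (Fin N × Fin N) × (Fin N × Fin N) =>
      (p.1.1 = p.2.1 ∧ (p.2.2 : ℕ) = (p.1.2 : ℕ) + 1) ∨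
      (p.1.2 = p.2.2 ∧ (p.2.1 : ℕ) = (p.1.1 : ℕ) + 1)),
    |f p.1 - f p.2|

/-- The average Pauli weight of the Jordan–Wigner transformation of the
square-lattice hopping Hamiltonian with enumeration `f`: the hopping term on an
edge `(α,β)` has Pauli weight `|f α − f β| + 1`, and there are `2N(N−1)` edges. -/
noncomputable def APV (N : ℕ) (f : Fin N × Fin N → ℤ) : ℝ :=
  (∑ p ∈ Finset.univ.filter (fun p : (Fin N × Fin N) × (Fin N × Fin N) =>
      (p.1.1 = p.2.1 ∧ (p.2.2 : ℕ) = (p.1.2 : ℕ) + 1) ∨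
      (p.1.2 = p.2.2 ∧ (p.2.1 : ℕ) = (p.1.1 : ℕ) + 1)),
    ((|f p.1 - f p.2| + 1 : ℤ) : ℝ)) / (2 * N * ((N : ℝ) - 1))

/-- The S-pattern (boustrophedon) enumeration of the `N × N` lattice. -/
def fS (N : ℕ) : Fin N × Fin N → ℤ := fun p =>
  if (p.1 : ℕ) % 2 = 0 then ((p.1 : ℕ) * N + (p.2 : ℕ) : ℕ)
  else ((p.1 : ℕ) * N + (N - 1 - (p.2 : ℕ)) : ℕ)

open Finset

lemma sum_fin_ite {M : Type*} [AddCommMonoid M] {N : ℕ} (k : ℕ) (g : Fin N → M) :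
    ∑ b : Fin N, (if (b : ℕ) = k then g b else 0)
      = if h : k < N then g ⟨k, h⟩ else 0 := by
  split
  · rename_i h
    rw [Finset.sum_eq_single ⟨k, h⟩]
    · simp
    · intro b _ hb
      rw [if_neg]
      simpa [Fin.ext_iff] using hb
    · simp
  · rename_i h
    apply Finset.sum_eq_zero
    intro b _
    rw [if_neg]
    have := b.isLt
    omega

lemma sum_edges (N : ℕ) (g : (Fin N × Fin N) → (Fin N × Fin N) → ℤ) :
    ∑ p ∈ Finset.univ.filter (fun p : (Fin N × Fin N) × (Fin N × Fin N) =>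
        (p.1.1 = p.2.1 ∧ (p.2.2 : ℕ) = (p.1.2 : ℕ) + 1) ∨
        (p.1.2 = p.2.2 ∧ (p.2.1 : ℕ) = (p.1.1 : ℕ) + 1)), g p.1 p.2
    = ∑ a : Fin N × Fin N,
        ((if h : (a.2 : ℕ) + 1 < N then g a (a.1, ⟨(a.2 : ℕ) + 1, h⟩) else 0)
          + (if h : (a.1 : ℕ) + 1 < N then g a (⟨(a.1 : ℕ) + 1, h⟩, a.2) else 0)) := by
  rw [Finset.sum_filter, Fintype.sum_prod_type]
  refine Finset.sum_congr rfl fun a _ => ?_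
  rw [Fintype.sum_prod_type]
  have hsplit : ∀ b1 b2 : Fin N,
      (if ((a.1 = b1 ∧ ((b2 : ℕ) = (a.2 : ℕ) + 1)) ∨ (a.2 = b2 ∧ ((b1 : ℕ) = (a.1 : ℕ) + 1)))
        then g a (b1, b2) else 0)
      = (if (a.1 = b1 ∧ ((b2 : ℕ) = (a.2 : ℕ) + 1)) then g a (b1, b2) else 0)
        + (if (a.2 = b2 ∧ ((b1 : ℕ) = (a.1 : ℕ) + 1)) then g a (b1, b2) else 0) := by
    intro b1 b2
    by_cases h1 : (a.1 = b1 ∧ ((b2 : ℕ) = (a.2 : ℕ) + 1))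
    · have h2 : ¬ (a.2 = b2 ∧ ((b1 : ℕ) = (a.1 : ℕ) + 1)) := by
        rintro ⟨he, -⟩
        have := h1.2
        rw [← he] at this
        omega
      simp [h1, h2]
    · by_cases h2 : (a.2 = b2 ∧ ((b1 : ℕ) = (a.1 : ℕ) + 1)) <;> simp [h1, h2]
  simp only [hsplit, Finset.sum_add_distrib]
  congr 1
  · have h1 : ∀ b1 : Fin N,
        (∑ b2 : Fin N, if (a.1 = b1 ∧ ((b2 : ℕ) = (a.2 : ℕ) + 1)) then g a (b1, b2) else 0)
        = (if a.1 = b1 then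
            (if h : (a.2 : ℕ) + 1 < N then g a (b1, ⟨(a.2 : ℕ) + 1, h⟩) else 0) else 0) := by
      intro b1
      by_cases hb : a.1 = b1
      · simp only [hb, true_and, if_pos rfl]
        exact sum_fin_ite _ _
      · rw [if_neg hb]
        apply Finset.sum_eq_zero
        intro b2 _
        rw [if_neg]
        tauto
    simp only [h1]
    rw [Finset.sum_ite_eq]
    simp
  · have h2 : ∀ b1 : Fin N,
        (∑ b2 : Fin N, if (a.2 = b2 ∧ ((b1 : ℕ) = (a.1 : ℕ) + 1)) then g a (b1, b2) else 0)
        = (if (b1 : ℕ) = (a.1 : ℕ) + 1 then g a (b1, a.2) else 0) := by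
      intro b1
      by_cases hb : (b1 : ℕ) = (a.1 : ℕ) + 1
      · simp only [hb, and_true]
        rw [Finset.sum_ite_eq]
        simp
      · rw [if_neg hb]
        apply Finset.sum_eq_zero
        intro b2 _
        rw [if_neg]
        tauto
    simp only [h2]
    exact sum_fin_ite _ _

lemma prod_sum_to_range {M : Type*} [AddCommMonoid M] (N : ℕ) (G : ℕ → ℕ → M) :
    ∑ a : Fin N × Fin N, G (a.1 : ℕ) (a.2 : ℕ)
      = ∑ i ∈ range N, ∑ j ∈ range N, G i j := by
  rw [Fintype.sum_prod_type]
  rw [Fin.sum_univ_eq_sum_range (fun i => ∑ a2 : Fin N, G i (a2 : ℕ)) N]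
  exact Finset.sum_congr rfl fun i _ => Fin.sum_univ_eq_sum_range (G i) N

lemma sum_indicator (N : ℕ) (v : ℕ → ℤ) :
    ∑ j ∈ range N, (if j + 1 < N then v j else 0) = ∑ j ∈ range (N - 1), v j := by
  rw [← Finset.sum_filter]
  congr 1
  ext j
  simp only [mem_filter, mem_range]
  omega

lemma sumJ2 (N : ℕ) : (∑ j ∈ range N, (j : ℤ)) * 2 = N * (N - 1) := by
  induction N with
  | zero => simp
  | succ n ih =>
    rw [Finset.sum_range_succ]
    push_cast
    push_cast at ih
    ring_nf
    ring_nf at ih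
    linarith

lemma sumA (N : ℕ) : ∑ j ∈ range N, (2 * (N : ℤ) - 1 - 2 * j) = (N : ℤ) ^ 2 := by
  have h1 : ∑ j ∈ range N, (2 * (N : ℤ) - 1 - 2 * j)
      = ∑ j ∈ range N, (2 * (N : ℤ) - 1) - ∑ j ∈ range N, (2 * (j : ℤ)) := by
    rw [← Finset.sum_sub_distrib]
  rw [h1, Finset.sum_const, card_range, ← Finset.mul_sum]
  have h2 := sumJ2 N
  linear_combination -h2

lemma sumB (N : ℕ) : ∑ j ∈ range N, (2 * (j : ℤ) + 1) = (N : ℤ) ^ 2 := by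
  induction N with
  | zero => simp
  | succ n ih =>
    rw [Finset.sum_range_succ, ih]
    push_cast
    ring

lemma card_edges (N : ℕ) (hN : 1 ≤ N) :
    ∑ _p ∈ Finset.univ.filter (fun p : (Fin N × Fin N) × (Fin N × Fin N) =>
        (p.1.1 = p.2.1 ∧ (p.2.2 : ℕ) = (p.1.2 : ℕ) + 1) ∨
        (p.1.2 = p.2.2 ∧ (p.2.1 : ℕ) = (p.1.1 : ℕ) + 1)), (1 : ℤ)
      = 2 * N * ((N : ℤ) - 1) := by
  rw [sum_edges N (fun _ _ => (1 : ℤ))]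
  have hG : ∀ a : Fin N × Fin N,
      ((if _h : (a.2 : ℕ) + 1 < N then (1 : ℤ) else 0)
        + (if _h : (a.1 : ℕ) + 1 < N then (1 : ℤ) else 0))
      = ((if (a.2 : ℕ) + 1 < N then (1 : ℤ) else 0)
        + (if (a.1 : ℕ) + 1 < N then (1 : ℤ) else 0)) := by
    intro a
    simp
  simp only [hG]
  rw [prod_sum_to_range N
    (fun i j => (if j + 1 < N then (1 : ℤ) else 0) + (if i + 1 < N then (1 : ℤ) else 0))]
  have hinner : ∀ i : ℕ, ∑ j ∈ range N,
      ((if j + 1 < N then (1 : ℤ) else 0) + (if i + 1 < N then (1 : ℤ) else 0))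
      = ((N : ℤ) - 1) + (N : ℤ) * (if i + 1 < N then (1 : ℤ) else 0) := by
    intro i
    rw [Finset.sum_add_distrib, sum_indicator N (fun _ => (1 : ℤ)), Finset.sum_const,
      Finset.sum_const, card_range, card_range, nsmul_eq_mul, nsmul_eq_mul, mul_one]
    have : ((N - 1 : ℕ) : ℤ) = (N : ℤ) - 1 := by omega
    rw [this]
  simp only [hinner]
  rw [Finset.sum_add_distrib, Finset.sum_const, card_range, ← Finset.mul_sum,
    sum_indicator N (fun _ => (1 : ℤ)), Finset.sum_const, card_range, nsmul_eq_mul,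
    nsmul_eq_mul, mul_one]
  have : ((N - 1 : ℕ) : ℤ) = (N : ℤ) - 1 := by omega
  rw [this]
  ring

lemma horiz {N : ℕ} (i j : Fin N) (h : (j : ℕ) + 1 < N) :
    |fS N (i, j) - fS N (i, ⟨(j : ℕ) + 1, h⟩)| = 1 := by
  have hj := j.isLt
  unfold fS
  simp only
  set m := (i : ℕ) * N with hm
  by_cases hp : (i : ℕ) % 2 = 0
  · rw [if_pos hp, if_pos hp]
    have : ((m + (j : ℕ) : ℕ) : ℤ) - ((m + ((j : ℕ) + 1) : ℕ) : ℤ) = -1 := by omega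
    rw [this]
    simp
  · rw [if_neg hp, if_neg hp]
    have : ((m + (N - 1 - (j : ℕ)) : ℕ) : ℤ)
        - ((m + (N - 1 - ((j : ℕ) + 1)) : ℕ) : ℤ) = 1 := by omega
    rw [this]
    simp

lemma vert {N : ℕ} (i j : Fin N) (h : (i : ℕ) + 1 < N) :
    |fS N (i, j) - fS N (⟨(i : ℕ) + 1, h⟩, j)| =
      if (i : ℕ) % 2 = 0 then 2 * (N : ℤ) - 1 - 2 * (j : ℕ) else 2 * (j : ℕ) + 1 := by
  have hj := j.isLt
  unfold fS
  simp only
  have hmul : ((i : ℕ) + 1) * N = (i : ℕ) * N + N := by ring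
  rw [hmul]
  set m := (i : ℕ) * N with hm
  by_cases hp : (i : ℕ) % 2 = 0
  · have hp' : ¬ ((i : ℕ) + 1) % 2 = 0 := by omega
    rw [if_pos hp, if_neg hp', if_pos hp]
    have hd : ((m + (j : ℕ) : ℕ) : ℤ) - ((m + N + (N - 1 - (j : ℕ)) : ℕ) : ℤ)
        = -(2 * (N : ℤ) - 1 - 2 * (j : ℕ)) := by omega
    rw [hd, abs_neg, abs_of_nonneg (by omega)]
  · have hp' : ((i : ℕ) + 1) % 2 = 0 := by omega
    rw [if_neg hp, if_pos hp', if_neg hp]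
    have hd : ((m + (N - 1 - (j : ℕ)) : ℕ) : ℤ) - ((m + N + (j : ℕ) : ℕ) : ℤ)
        = -(2 * (j : ℕ) + 1) := by omega
    rw [hd, abs_neg, abs_of_nonneg (by omega)]

lemma edgesum_fS (N : ℕ) (hN : 2 ≤ N) : edgesum N (fS N) = (N : ℤ) ^ 3 - N := by
  unfold edgesum
  rw [sum_edges N (fun p q => |fS N p - fS N q|)]
  have h1 : ∀ a : Fin N × Fin N,
      (if h : (a.2 : ℕ) + 1 < N then |fS N a - fS N (a.1, ⟨(a.2 : ℕ) + 1, h⟩)| else 0)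
      = (if (a.2 : ℕ) + 1 < N then (1 : ℤ) else 0) := by
    intro a
    split
    · rename_i h
      exact horiz a.1 a.2 h
    · rfl
  have h2 : ∀ a : Fin N × Fin N,
      (if h : (a.1 : ℕ) + 1 < N then |fS N a - fS N (⟨(a.1 : ℕ) + 1, h⟩, a.2)| else 0)
      = (if (a.1 : ℕ) + 1 < N then
          (if (a.1 : ℕ) % 2 = 0 then 2 * (N : ℤ) - 1 - 2 * (a.2 : ℕ)
            else 2 * (a.2 : ℕ) + 1) else 0) := by
    intro a
    split
    · rename_i h
      rw [vert a.1 a.2 h]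
    · rfl
  simp only [h1, h2]
  rw [prod_sum_to_range N (fun i j =>
    (if j + 1 < N then (1 : ℤ) else 0)
      + (if i + 1 < N then
          (if i % 2 = 0 then 2 * (N : ℤ) - 1 - 2 * j else 2 * j + 1) else 0))]
  have hinner : ∀ i : ℕ, ∑ j ∈ range N,
      ((if j + 1 < N then (1 : ℤ) else 0)
        + (if i + 1 < N then
            (if i % 2 = 0 then 2 * (N : ℤ) - 1 - 2 * j else 2 * j + 1) else 0))
      = ((N : ℤ) - 1) + (if i + 1 < N then (N : ℤ) ^ 2 else 0) := by
    intro i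
    rw [Finset.sum_add_distrib, sum_indicator N (fun _ => (1 : ℤ)), Finset.sum_const,
      card_range, nsmul_eq_mul, mul_one]
    have hc1 : ((N - 1 : ℕ) : ℤ) = (N : ℤ) - 1 := by omega
    rw [hc1]
    congr 1
    by_cases hc : i + 1 < N
    · simp only [if_pos hc]
      by_cases hp : i % 2 = 0
      · simp only [if_pos hp]
        exact sumA N
      · simp only [if_neg hp]
        exact sumB N
    · simp [hc]
  simp only [hinner]
  rw [Finset.sum_add_distrib, Finset.sum_const, card_range, nsmul_eq_mul,
    sum_indicator N (fun _ => (N : ℤ) ^ 2), Finset.sum_const, card_range, nsmul_eq_mul]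
  have hc1 : ((N - 1 : ℕ) : ℤ) = (N : ℤ) - 1 := by omega
  rw [hc1]
  ring

/-- The average Pauli weight equals `C¹(f)/(2N(N−1)) + 1`; for the S-pattern it
equals `N/2 + 3/2`. -/
theorem average_pauli_weight (N : ℕ) (hN : 2 ≤ N) :
    (∀ f : Fin N × Fin N → ℤ,
      APV N f = ((edgesum N f : ℤ) : ℝ) / (2 * N * ((N : ℝ) - 1)) + 1) ∧
    APV N (fS N) = (N : ℝ) / 2 + 3 / 2 := by
  have hNR : (2 : ℝ) ≤ (N : ℝ) := by exact_mod_cast hN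
  have hD : (2 * (N : ℝ) * ((N : ℝ) - 1)) ≠ 0 := by nlinarith
  have key : ∀ f : Fin N × Fin N → ℤ,
      APV N f = ((edgesum N f : ℤ) : ℝ) / (2 * N * ((N : ℝ) - 1)) + 1 := by
    intro f
    unfold APV
    have hnum : (∑ p ∈ Finset.univ.filter (fun p : (Fin N × Fin N) × (Fin N × Fin N) =>
        (p.1.1 = p.2.1 ∧ (p.2.2 : ℕ) = (p.1.2 : ℕ) + 1) ∨
        (p.1.2 = p.2.2 ∧ (p.2.1 : ℕ) = (p.1.1 : ℕ) + 1)),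
          ((|f p.1 - f p.2| + 1 : ℤ) : ℝ))
        = ((edgesum N f : ℤ) : ℝ) + (2 * (N : ℝ) * ((N : ℝ) - 1)) := by
      rw [← Int.cast_sum, Finset.sum_add_distrib]
      rw [card_edges N (by omega)]
      unfold edgesum
      push_cast
      ring
    rw [hnum, add_div, div_self hD]
  refine ⟨key, ?_⟩
  rw [key, edgesum_fS N hN]
  push_cast
  have hN1 : (N : ℝ) - 1 ≠ 0 := by linarith
  field_simp
  ring
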